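/- For any maps s, β : {1,…,n} → E, | Σ_{ℓ=1}^k Σ_{i∈G_ℓ} ⟨s_i, β_i − β̄_ℓ⟩ | ≤ Σ_{ℓ=1}^k (1/|G_ℓ|) Σ_{i<j, i,j∈G_ℓ} ‖s_i − s_j‖ · ‖β_i − β_j‖. -/

import Mathlib

/-!
Subtracting the block mean turns each block sum into `|G|⁻¹ ∑_{i,j ∈ G} ⟪s i, β i - β j⟫`.
Symmetrizing in `i, j` rewrites this as `|G|⁻¹ ∑_{i<j} ⟪s i - s j, β i - β j⟫`, and
Cauchy–Schwarz bounds every term; the blocks are then handled one at a time by the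
triangle inequality.
-/

open RealInnerProductSpace Finset

namespace Finset

variable {ι M : Type*} [LinearOrder ι] [AddCommMonoid M]

theorem sum_product_eq_two_nsmul_sum_filter_lt (s : Finset ι) (f : ι → ι → M)
    (hf_symm : ∀ i j, f i j = f j i) (hf_diag : ∀ i, f i i = 0) :
    ∑ p ∈ s ×ˢ s, f p.1 p.2 = 2 • ∑ p ∈ s ×ˢ s with p.1 < p.2, f p.1 p.2 := by
  have h_ge : ∑ p ∈ s ×ˢ s with ¬p.1 < p.2, f p.1 p.2 =
      ∑ p ∈ s ×ˢ s with p.2 < p.1, f p.1 p.2 := by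
    refine (sum_subset (fun p ↦ by simp +contextual [le_of_lt]) fun p hp hp' ↦ ?_).symm
    simp only [mem_filter, not_and, not_lt] at hp hp'
    rw [le_antisymm (hp' hp.1) hp.2, hf_diag]
  have h_gt : ∑ p ∈ s ×ˢ s with p.2 < p.1, f p.1 p.2 =
      ∑ p ∈ s ×ˢ s with p.1 < p.2, f p.1 p.2 :=
    sum_equiv (Equiv.prodComm ι ι) (by simp [and_comm]) fun p _ ↦ hf_symm _ _
  rw [← sum_filter_add_sum_filter_not _ (fun p : ι × ι ↦ p.1 < p.2), h_ge, h_gt, two_nsmul]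

end Finset

section InnerProduct

variable {ι E : Type*} [NormedAddCommGroup E] [InnerProductSpace ℝ E]
  (G : Finset ι) (s β : ι → E)

theorem sum_inner_sub_average_eq :
    ∑ i ∈ G, ⟪s i, β i - (#G : ℝ)⁻¹ • ∑ j ∈ G, β j⟫ =
      (#G : ℝ)⁻¹ * ∑ i ∈ G, ∑ j ∈ G, ⟪s i, β i - β j⟫ := by
  rw [mul_sum]
  refine sum_congr rfl fun i hi ↦ ?_
  have hG : (#G : ℝ) ≠ 0 := Nat.cast_ne_zero.2 (card_ne_zero_of_mem hi)
  have h_center : β i - (#G : ℝ)⁻¹ • ∑ j ∈ G, β j = (#G : ℝ)⁻¹ • ∑ j ∈ G, (β i - β j) := by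
    rw [sum_sub_distrib, smul_sub, sum_const, ← Nat.cast_smul_eq_nsmul ℝ, smul_smul,
      inv_mul_cancel₀ hG, one_smul]
  rw [h_center, inner_smul_right, inner_sum]

theorem two_mul_sum_sum_inner_sub :
    2 * ∑ i ∈ G, ∑ j ∈ G, ⟪s i, β i - β j⟫ = ∑ i ∈ G, ∑ j ∈ G, ⟪s i - s j, β i - β j⟫ := by
  have h_swap : ∑ i ∈ G, ∑ j ∈ G, ⟪s j, β i - β j⟫ = -∑ i ∈ G, ∑ j ∈ G, ⟪s i, β i - β j⟫ := by
    rw [sum_comm, ← sum_neg_distrib]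
    refine sum_congr rfl fun i _ ↦ ?_
    rw [← sum_neg_distrib]
    refine sum_congr rfl fun j _ ↦ ?_
    rw [← inner_neg_right, neg_sub]
  simp only [inner_sub_left, sum_sub_distrib, h_swap]
  ring

theorem sum_sum_inner_sub_eq_sum_filter_lt [LinearOrder ι] :
    ∑ i ∈ G, ∑ j ∈ G, ⟪s i, β i - β j⟫ =
      ∑ p ∈ G ×ˢ G with p.1 < p.2, ⟪s p.1 - s p.2, β p.1 - β p.2⟫ := by
  have h := two_mul_sum_sum_inner_sub G s β
  rw [← sum_product' (f := fun i j ↦ ⟪s i - s j, β i - β j⟫),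
    sum_product_eq_two_nsmul_sum_filter_lt G (fun i j ↦ ⟪s i - s j, β i - β j⟫)
      (fun i j ↦ by rw [← inner_neg_neg, neg_sub, neg_sub]) (fun i ↦ by simp),
    two_nsmul, ← two_mul] at h
  exact mul_left_cancel₀ two_ne_zero h

theorem abs_sum_inner_sub_average_le [LinearOrder ι] :
    |∑ i ∈ G, ⟪s i, β i - (#G : ℝ)⁻¹ • ∑ j ∈ G, β j⟫| ≤
      (#G : ℝ)⁻¹ * ∑ p ∈ G ×ˢ G with p.1 < p.2, ‖s p.1 - s p.2‖ * ‖β p.1 - β p.2‖ := by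
  rw [sum_inner_sub_average_eq, sum_sum_inner_sub_eq_sum_filter_lt, abs_mul,
    abs_of_nonneg (by positivity)]
  gcongr
  exact (abs_sum_le_sum_abs _ _).trans (sum_le_sum fun p _ ↦ abs_real_inner_le_norm _ _)

end InnerProduct

theorem stmt7_general {E : Type*} [NormedAddCommGroup E] [InnerProductSpace ℝ E]
    (n k : ℕ)
    (G : Fin k → Finset (Fin n))
    (s β : Fin n → E) :
    |∑ ℓ, ∑ i ∈ G ℓ, ⟪s i, β i - (((G ℓ).card : ℝ))⁻¹ • ∑ j ∈ G ℓ, β j⟫|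
      ≤ ∑ ℓ, (((G ℓ).card : ℝ))⁻¹ *
          ∑ pr ∈ ((G ℓ) ×ˢ (G ℓ)).filter (fun pr => pr.1 < pr.2),
            ‖s pr.1 - s pr.2‖ * ‖β pr.1 - β pr.2‖ :=
  (abs_sum_le_sum_abs _ _).trans (sum_le_sum fun _ _ ↦ abs_sum_inner_sub_average_le _ s β)

/-- For a partition G₁,…,G_k of {1,…,n} into nonempty blocks and maps
s, β : {1,…,n} → E,
| Σ_ℓ Σ_{i∈G_ℓ} ⟨s_i, β_i − β̄_ℓ⟩ | ≤ Σ_ℓ (1/|G_ℓ|) Σ_{i<j∈G_ℓ} ‖s_i − s_j‖·‖β_i − β_j‖. -/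
theorem stmt7 {E : Type*} [NormedAddCommGroup E] [InnerProductSpace ℝ E]
    (n k : ℕ) (hn : 1 ≤ n) (hk : 1 ≤ k)
    (G : Fin k → Finset (Fin n))
    (hne : ∀ ℓ, (G ℓ).Nonempty)
    (hdisj : ∀ ℓ₁ ℓ₂, ℓ₁ ≠ ℓ₂ → Disjoint (G ℓ₁) (G ℓ₂))
    (hcov : ∀ i, ∃ ℓ, i ∈ G ℓ)
    (s β : Fin n → E) :
    |∑ ℓ, ∑ i ∈ G ℓ, ⟪s i, β i - (((G ℓ).card : ℝ))⁻¹ • ∑ j ∈ G ℓ, β j⟫|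
      ≤ ∑ ℓ, (((G ℓ).card : ℝ))⁻¹ *
          ∑ pr ∈ ((G ℓ) ×ˢ (G ℓ)).filter (fun pr => pr.1 < pr.2),
            ‖s pr.1 - s pr.2‖ * ‖β pr.1 - β pr.2‖ :=
  stmt7_general n k G s β
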